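/- Let t be the Thue-Morse sequence and t_m its m-fold running sum mod 2. Fix n ≥ 0, and for k ≥ 0 write q = ⌊k/2^{n+2}⌋ and r = k mod 2^{n+2}. Then: t_{2^n}[k] ≡ t[q] + t[r] (mod 2) if 0 ≤ r ≤ 2^n − 1; t_{2^n}[k] = 1 if 2^n ≤ r ≤ 2·2^n − 1; t_{2^n}[k] ≡ t[q] + t[r − 2·2^n] (mod 2) if 2·2^n ≤ r ≤ 3·2^n − 1; and t_{2^n}[k] = 0 if 3·2^n ≤ r ≤ 2^{n+2} − 1. -/

import Mathlib

/-! In characteristic two `(1 - X) ^ 2 ^ n = 1 - X ^ 2 ^ n`, so `2 ^ n` running sums add up a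
sequence along the residue class of `k` mod `2 ^ n`: for `k = c * 2 ^ n + s` with `s < 2 ^ n`,
`t_{2^n}[k] = ∑_{i ≤ c} t[i * 2 ^ n + s] = ∑_{i ≤ c} t[i] + (c + 1) t[s]` mod 2, because the binary
digits of `i * 2 ^ n + s` are those of `s` followed by those of `i`. Each pair `t[2i], t[2i+1]` is
`01` or `10`, so `∑_{i < 4q} t[i]` is even, and `t[4q + j] = t[q] + t[j]` for `j < 4` turns the
four values of `c mod 4` into the four cases. -/

/-- The Thue–Morse sequence: parity of the number of 1s in the binary representation. -/
def t (k : ℕ) : ℕ := (Nat.digits 2 k).sum % 2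

/-- `ts m` is the m-fold iterated running sum (mod 2) of the Thue–Morse sequence. -/
def ts : ℕ → ℕ → ℕ
  | 0, k => t k
  | m + 1, k => (∑ j ∈ Finset.range (k + 1), ts m j) % 2

open Finset

lemma t_lt_two (k : ℕ) : t k < 2 := Nat.mod_lt _ two_pos

lemma ts_lt_two : ∀ m k, ts m k < 2
  | 0, k => t_lt_two k
  | _ + 1, _ => Nat.mod_lt _ two_pos

lemma natCast_t (k : ℕ) : (t k : ZMod 2) = (k % 2 : ℕ) + t (k / 2) := by
  rcases Nat.eq_zero_or_pos k with rfl | hk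
  · simp [t]
  · simp only [t, ZMod.natCast_mod, Nat.digits_def' one_lt_two hk, List.sum_cons, Nat.cast_add]

lemma natCast_t_mul_two_pow_add (a : ℕ) {n s : ℕ} (hs : s < 2 ^ n) :
    (t (a * 2 ^ n + s) : ZMod 2) = t a + t s := by
  induction n generalizing s with
  | zero => simp_all [t]
  | succ n ih =>
    rw [pow_succ] at hs
    rw [natCast_t, pow_succ, ← mul_assoc, show (a * 2 ^ n * 2 + s) / 2 = a * 2 ^ n + s / 2 by omega,
      ih (by omega), Nat.mul_add_mod_self_right, natCast_t s]
    ring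

lemma natCast_t_four_mul_add (q : ℕ) {j : ℕ} (hj : j < 4) :
    (t (4 * q + j) : ZMod 2) = t q + t j := by
  simpa [mul_comm] using natCast_t_mul_two_pow_add q (n := 2) hj

lemma sum_range_two_mul_t (m : ℕ) : ∑ i ∈ range (2 * m), (t i : ZMod 2) = m := by
  induction m with
  | zero => simp
  | succ m ih =>
    have h_even : (t (2 * m) : ZMod 2) = t m := by simp [natCast_t (2 * m)]
    have h_odd : (t (2 * m + 1) : ZMod 2) = 1 + t m := by
      simp [natCast_t (2 * m + 1), Nat.mul_add_div two_pos]
    rw [mul_add_one, sum_range_succ, sum_range_succ, ih, h_even, h_odd]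
    push_cast
    linear_combination CharTwo.add_self_eq_zero (t m : ZMod 2)

section RunningSum

variable {R : Type*}

def runningSum [AddCommMonoid R] (f : ℕ → R) (k : ℕ) : R := ∑ j ∈ range (k + 1), f j

lemma runningSum_zero [AddCommMonoid R] (f : ℕ → R) : runningSum f 0 = f 0 := by
  simp [runningSum]

lemma runningSum_add_one [AddCommMonoid R] (f : ℕ → R) (k : ℕ) :
    runningSum f (k + 1) = runningSum f k + f (k + 1) :=
  sum_range_succ f (k + 1)

variable [Ring R] [CharP R 2]

lemma runningSum_iterate_two_pow (n : ℕ) (f : ℕ → R) :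
    (∀ k < 2 ^ n, runningSum^[2 ^ n] f k = f k) ∧
    ∀ k, runningSum^[2 ^ n] f (k + 2 ^ n) = runningSum^[2 ^ n] f k + f (k + 2 ^ n) := by
  induction n generalizing f with
  | zero =>
    refine ⟨fun k hk ↦ ?_, runningSum_add_one f⟩
    obtain rfl : k = 0 := by simpa using hk
    exact runningSum_zero f
  | succ n ih =>
    obtain ⟨hf_lt, hf_add⟩ := ih f
    obtain ⟨hg_lt, hg_add⟩ := ih (runningSum^[2 ^ n] f)
    have hiter : runningSum^[2 ^ (n + 1)] f = runningSum^[2 ^ n] (runningSum^[2 ^ n] f) := by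
      rw [pow_succ, mul_two, Function.iterate_add_apply]
    rw [hiter, pow_succ, mul_two]
    refine ⟨fun k hk ↦ ?_, fun k ↦ ?_⟩
    · rcases lt_or_ge k (2 ^ n) with hk' | hk'
      · rw [hg_lt k hk', hf_lt k hk']
      · obtain ⟨j, rfl⟩ := Nat.exists_eq_add_of_le' hk'
        rw [hg_add, hg_lt j (by omega), hf_add, hf_lt j (by omega), ← add_assoc,
          CharTwo.add_self_eq_zero, zero_add]
    · rw [← add_assoc, hg_add, hg_add, hf_add (k + 2 ^ n), add_assoc, ← add_assoc (_ : R) _ (f _),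
        CharTwo.add_self_eq_zero, zero_add]

lemma runningSum_iterate_two_pow_mul_add (f : ℕ → R) {n s : ℕ} (hs : s < 2 ^ n) (c : ℕ) :
    runningSum^[2 ^ n] f (c * 2 ^ n + s) = ∑ i ∈ range (c + 1), f (i * 2 ^ n + s) := by
  obtain ⟨h_lt, h_add⟩ := runningSum_iterate_two_pow n f
  induction c with
  | zero => simpa using h_lt s hs
  | succ c ih =>
    rw [sum_range_succ, ← ih, show (c + 1) * 2 ^ n + s = c * 2 ^ n + s + 2 ^ n by ring, h_add]

end RunningSum

lemma natCast_ts (m k : ℕ) :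
    (ts m k : ZMod 2) = runningSum^[m] (fun i ↦ (t i : ZMod 2)) k := by
  induction m generalizing k with
  | zero => rfl
  | succ m ih =>
    simp only [ts, ZMod.natCast_mod, Nat.cast_sum, ih, Function.iterate_succ_apply', runningSum]

lemma natCast_ts_two_pow_mul_add {n s : ℕ} (hs : s < 2 ^ n) (c : ℕ) :
    (ts (2 ^ n) (c * 2 ^ n + s) : ZMod 2) = ∑ i ∈ range (c + 1), (t i : ZMod 2) + (c + 1) * t s := by
  rw [natCast_ts, runningSum_iterate_two_pow_mul_add _ hs]
  simp [natCast_t_mul_two_pow_add _ hs, sum_add_distrib]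

lemma natCast_ts_two_pow_four_mul_add {n s c : ℕ} (hs : s < 2 ^ n) (hc : c < 4) (q : ℕ) :
    (ts (2 ^ n) ((4 * q + c) * 2 ^ n + s) : ZMod 2) =
      (c + 1) * (t q + t s) + ∑ i ∈ range (c + 1), (t i : ZMod 2) := by
  have hblock : ∑ i ∈ range (c + 1), (t (4 * q + i) : ZMod 2) =
      (c + 1) * t q + ∑ i ∈ range (c + 1), (t i : ZMod 2) := by
    rw [sum_congr rfl fun i hi ↦ natCast_t_four_mul_add q (by simp at hi; omega)]
    simp [sum_add_distrib]
  have hfour : ∑ i ∈ range (4 * q), (t i : ZMod 2) = (2 * q : ℕ) := by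
    rw [show 4 * q = 2 * (2 * q) by ring, sum_range_two_mul_t]
  rw [natCast_ts_two_pow_mul_add hs, add_assoc, sum_range_add, hfour, hblock]
  push_cast
  ring_nf
  reduce_mod_char

lemma natCast_ts_two_pow_of_mod {n k c : ℕ} (hlo : c * 2 ^ n ≤ k % 2 ^ (n + 2))
    (hhi : k % 2 ^ (n + 2) < (c + 1) * 2 ^ n) :
    (ts (2 ^ n) k : ZMod 2) = (c + 1) * (t (k / 2 ^ (n + 2)) + t (k % 2 ^ (n + 2) - c * 2 ^ n)) +
      ∑ i ∈ range (c + 1), (t i : ZMod 2) := by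
  have hpow : 2 ^ (n + 2) = 4 * 2 ^ n := by ring
  have hc : c < 4 := Nat.lt_of_mul_lt_mul_right (a := 2 ^ n) <|
    hpow ▸ hlo.trans_lt (Nat.mod_lt _ (by positivity))
  have hk : k = (4 * (k / 2 ^ (n + 2)) + c) * 2 ^ n + (k % 2 ^ (n + 2) - c * 2 ^ n) := by
    conv_lhs => rw [← Nat.div_add_mod k (2 ^ (n + 2)), ← Nat.add_sub_of_le hlo]
    ring
  conv_lhs => rw [hk]
  exact natCast_ts_two_pow_four_mul_add (by rw [add_one_mul] at hhi; omega) hc _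

lemma ts_eq_of_natCast_eq {m k b : ℕ} (hb : b < 2) (h : (ts m k : ZMod 2) = b) : ts m k = b :=
  ((ZMod.natCast_eq_natCast_iff _ _ _).1 h).eq_of_lt_of_lt (ts_lt_two m k) hb

theorem tm_pow2sum_explicit (n k : ℕ) :
    (k % 2 ^ (n + 2) ≤ 2 ^ n - 1 →
      ts (2 ^ n) k ≡ t (k / 2 ^ (n + 2)) + t (k % 2 ^ (n + 2)) [MOD 2]) ∧
    (2 ^ n ≤ k % 2 ^ (n + 2) → k % 2 ^ (n + 2) ≤ 2 * 2 ^ n - 1 →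
      ts (2 ^ n) k = 1) ∧
    (2 * 2 ^ n ≤ k % 2 ^ (n + 2) → k % 2 ^ (n + 2) ≤ 3 * 2 ^ n - 1 →
      ts (2 ^ n) k ≡ t (k / 2 ^ (n + 2)) + t (k % 2 ^ (n + 2) - 2 * 2 ^ n) [MOD 2]) ∧
    (3 * 2 ^ n ≤ k % 2 ^ (n + 2) → k % 2 ^ (n + 2) ≤ 2 ^ (n + 2) - 1 →
      ts (2 ^ n) k = 0) := by
  have hpow : 2 ^ (n + 2) = 4 * 2 ^ n := by ring
  have ht : t 0 = 0 ∧ t 1 = 1 ∧ t 2 = 1 ∧ t 3 = 0 := by decide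
  refine ⟨fun h ↦ ?_, fun h₁ h₂ ↦ ?_, fun h₁ h₂ ↦ ?_, fun h₁ h₂ ↦ ?_⟩
  · have hv := natCast_ts_two_pow_of_mod (n := n) (k := k) (c := 0) (by simp) (by omega)
    simp [ht] at hv
    exact (ZMod.natCast_eq_natCast_iff _ _ _).1 (by simpa using hv)
  · have hv := natCast_ts_two_pow_of_mod (n := n) (k := k) (c := 1) (by omega) (by omega)
    simp [sum_range_succ, ht] at hv
    reduce_mod_char at hv
    exact ts_eq_of_natCast_eq one_lt_two (by simpa using hv)
  · have hv := natCast_ts_two_pow_of_mod (n := n) (k := k) (c := 2) h₁ (by omega)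
    simp [sum_range_succ, ht] at hv
    reduce_mod_char at hv
    exact (ZMod.natCast_eq_natCast_iff _ _ _).1 (by simpa using hv)
  · have hv := natCast_ts_two_pow_of_mod (n := n) (k := k) (c := 3) h₁ (by omega)
    simp [sum_range_succ, ht] at hv
    reduce_mod_char at hv
    exact ts_eq_of_natCast_eq two_pos (by simpa using hv)
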